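/- arXiv:0803.2070 — 2 statements merged into one kernel-verified Lean document; each statement's English description precedes it below -/
import Mathlib

section
/- Let Δt ∈ ℝ, and let B, E : ℕ → ℤ³ → ℝ³ be sequences of lattice vector fields satisfying the Yee–Faraday update rule B(n+1) = B(n) − Δt • curl_h (E(n)) for every n ∈ ℕ (this is the discrete equation dF = 0 on the spacetime cells of the rectangular mesh). Then div_h (B(n)) = div_h (B(0)) for every n ∈ ℕ; in particular, if div_h (B(0)) = 0, then div_h (B(n)) = 0 for all n. (This is the paper's claim that the Yee FDTD scheme, derived as a variational integrator, exactly preserves the discrete magnetic divergence constraint.) -/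
noncomputable section

/-- The cubic lattice ℤ³ as `Fin 3 → ℤ`. -/
abbrev Lat3 := Fin 3 → ℤ

/-- Forward difference in the i-th lattice direction. -/
def fdiff (i : Fin 3) (u : Lat3 → ℝ) (n : Lat3) : ℝ := u (n + (Pi.single i 1 : Lat3)) - u n

/-- Discrete curl of a lattice vector field. -/
def curlH (E : Lat3 → Fin 3 → ℝ) (n : Lat3) : Fin 3 → ℝ :=
  ![fdiff 1 (fun m => E m 2) n - fdiff 2 (fun m => E m 1) n,
    fdiff 2 (fun m => E m 0) n - fdiff 0 (fun m => E m 2) n,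
    fdiff 0 (fun m => E m 1) n - fdiff 1 (fun m => E m 0) n]

/-- Discrete divergence of a lattice vector field. -/
def divH (E : Lat3 → Fin 3 → ℝ) (n : Lat3) : ℝ :=
  fdiff 0 (fun m => E m 0) n + fdiff 1 (fun m => E m 1) n + fdiff 2 (fun m => E m 2) n

/-- Discrete gradient of a lattice scalar function. -/
def gradH (f : Lat3 → ℝ) (n : Lat3) : Fin 3 → ℝ :=
  ![fdiff 0 f n, fdiff 1 f n, fdiff 2 f n]


lemma divH_curlH (E : Lat3 → Fin 3 → ℝ) (m : Lat3) : divH (curlH E) m = 0 := by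
  simp only [divH, curlH, fdiff, Matrix.cons_val_zero, Matrix.cons_val_one, Matrix.head_cons,
    Matrix.cons_val_two, Matrix.tail_cons]
  simp only [add_right_comm m]
  ring

/-- The Yee–Faraday update rule exactly preserves the discrete magnetic
divergence constraint. -/
theorem yee_preserves_divB
    (Δt : ℝ) (B E : ℕ → Lat3 → Fin 3 → ℝ)
    (update : ∀ (n : ℕ) (m : Lat3) (i : Fin 3),
      B (n + 1) m i = B n m i - Δt * curlH (E n) m i) :
    (∀ (n : ℕ) (m : Lat3), divH (B n) m = divH (B 0) m) ∧
    ((∀ m : Lat3, divH (B 0) m = 0) → ∀ (n : ℕ) (m : Lat3), divH (B n) m = 0) := by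
  have key : ∀ (n : ℕ) (m : Lat3), divH (B n) m = divH (B 0) m := by
    intro n
    induction n with
    | zero => intro m; rfl
    | succ n ih =>
      intro m
      have : divH (B (n+1)) m = divH (B n) m - Δt * divH (curlH (E n)) m := by
        simp only [divH, fdiff, update]
        ring
      rw [this, divH_curlH, ih]
      ring
  exact ⟨key, fun h0 n m => (key n m).trans (h0 m)⟩
end
end

section
/- Let Δt ∈ ℝ, and let D, H, J : ℕ → ℤ³ → ℝ³ and ρ : ℕ → ℤ³ → ℝ be sequences of lattice fields satisfying the discrete Ampère update rule D(n+1) = D(n) + Δt • (curl_h (H(n)) − J(n)) and the discrete continuity of charge ρ(n+1) = ρ(n) − Δt • div_h (J(n)) for every n ∈ ℕ (these are the discrete equation d*F = 𝒥 on the spacetime dual cells and the discrete condition d𝒥 = 0). Then div_h (D(n)) − ρ(n) = div_h (D(0)) − ρ(0) for every n ∈ ℕ; in particular, if the discrete Gauss law div_h (D(0)) = ρ(0) holds initially, then div_h (D(n)) = ρ(n) for all n. (This is the paper's claim, via the discrete Noether theorem, that the variational Yee-type scheme with free sources exactly conserves the discrete momentum map d_Σ D − ρ, i.e., Gauss' law.)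 -/
noncomputable section

lemma div_curl_zero (H : Lat3 → Fin 3 → ℝ) (m : Lat3) : divH (curlH H) m = 0 := by
  simp only [divH, curlH, fdiff, Matrix.cons_val_zero, Matrix.cons_val_one, Matrix.head_cons,
    Matrix.cons_val_two, Matrix.tail_cons]
  have h : ∀ i j : Fin 3, m + Pi.single i 1 + Pi.single j 1 = m + Pi.single j 1 + Pi.single i 1 :=
    fun i j => by rw [add_right_comm]
  rw [h 0 1, h 0 2, h 1 2]
  ring

/-- The variational Yee-type scheme with free sources exactly conserves the
discrete momentum map `div_h D − ρ`, i.e., the discrete Gauss law. -/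
theorem yee_preserves_gauss
    (Δt : ℝ) (D H J : ℕ → Lat3 → Fin 3 → ℝ) (ρ : ℕ → Lat3 → ℝ)
    (ampere : ∀ (n : ℕ) (m : Lat3) (i : Fin 3),
      D (n + 1) m i = D n m i + Δt * (curlH (H n) m i - J n m i))
    (continuity : ∀ (n : ℕ) (m : Lat3),
      ρ (n + 1) m = ρ n m - Δt * divH (J n) m) :
    (∀ (n : ℕ) (m : Lat3), divH (D n) m - ρ n m = divH (D 0) m - ρ 0 m) ∧
    ((∀ m : Lat3, divH (D 0) m = ρ 0 m) →
      ∀ (n : ℕ) (m : Lat3), divH (D n) m = ρ n m) := by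
  have key : ∀ (n : ℕ) (m : Lat3), divH (D n) m - ρ n m = divH (D 0) m - ρ 0 m := by
    intro n
    induction n with
    | zero => intro m; rfl
    | succ n ih =>
      intro m
      have hD : divH (D (n + 1)) m
          = divH (D n) m + Δt * (divH (curlH (H n)) m - divH (J n) m) := by
        simp only [divH, fdiff, ampere]
        ring
      rw [hD, continuity, div_curl_zero]
      have := ih m
      linarith
  refine ⟨key, fun h0 n m => ?_⟩
  have := key n m
  have := h0 m
  linarith
end
end
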